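/- Let R be a graded-commutative ring such that R is Noetherian. Then the even-degree subring π_even(R) is Noetherian, and the odd part π_odd(R) is a finitely generated module over π_even(R). -/

import Mathlib

/-!
Let `e` and `o` be the projections of `R` onto its even and odd homogeneous components. For
`a` even, `e (r * a) = e r * a`; for `a` odd, `o (r * a) = e r * a`. Hence if `x` is even (odd)
and `x = ∑ rₖ aₖ` with the `aₖ` even (odd), applying `e` (`o`) rewrites this as
`x = ∑ e(rₖ) aₖ` with even coefficients. For ideals `I` of `π_even R` this gives
`R I ∩ π_even R = I`, so ascending chains in `π_even R` stay strict in `R`; and a finite set of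
odd generators of the left ideal `R · π_odd R` generates `π_odd R` over `π_even R`.
-/

open DirectSum

namespace GradedRing

variable {ι R σ : Type*} [DecidableEq ι] [AddMonoid ι] [Semiring R] [SetLike σ R]
  [AddSubmonoidClass σ R] (𝒜 : ι → σ) [GradedRing 𝒜]

def projPred (P : ι → Prop) [DecidablePred P] : R →+ R :=
  (toAddMonoid fun i => if P i then AddSubmonoidClass.subtype (𝒜 i) else 0).comp
    (decomposeAddEquiv 𝒜).toAddMonoidHom

variable {𝒜} {P Q : ι → Prop} [DecidablePred P] [DecidablePred Q]

theorem projPred_of_mem {i : ι} {x : R} (hx : x ∈ 𝒜 i) :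
    projPred 𝒜 P x = if P i then x else 0 := by
  have : projPred 𝒜 P x = (if P i then AddSubmonoidClass.subtype (𝒜 i) else 0) ⟨x, hx⟩ := by
    simp [projPred, decompose_of_mem 𝒜 hx]
  rw [this]
  split_ifs <;> rfl

theorem projPred_mul_of_mem {k : ι} (hPQ : ∀ i, P (i + k) ↔ Q i) {a : R} (ha : a ∈ 𝒜 k)
    (r : R) : projPred 𝒜 P (r * a) = projPred 𝒜 Q r * a := by
  induction r using Decomposition.inductionOn 𝒜 with
  | zero => simp
  | @homogeneous i r =>
    rw [projPred_of_mem (SetLike.mul_mem_graded r.2 ha), projPred_of_mem r.2]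
    by_cases h : Q i <;> simp [hPQ, h]
  | add r r' hr hr' => rw [add_mul, map_add, hr, hr', map_add, add_mul]

section Int

variable {R σ : Type*} [Ring R] [SetLike σ R] [AddSubmonoidClass σ R] {𝒜 : ℤ → σ} [GradedRing 𝒜]

theorem projPred_even_mem_closure (x : R) :
    projPred 𝒜 Even x ∈ Subring.closure {r : R | ∃ n : ℤ, r ∈ 𝒜 (2 * n)} := by
  induction x using Decomposition.inductionOn 𝒜 with
  | zero => simp
  | @homogeneous i x =>
    rw [projPred_of_mem x.2]
    split_ifs with h
    · obtain ⟨n, rfl⟩ := h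
      exact Subring.subset_closure ⟨n, by rw [two_mul]; exact x.2⟩
    · exact zero_mem _
  | add x y hx hy => rw [map_add]; exact add_mem hx hy

theorem projPred_even_one : projPred 𝒜 Even (1 : R) = 1 := by
  rw [projPred_of_mem (SetLike.GradedOne.one_mem (A := 𝒜)), if_pos Even.zero]

theorem projPred_even_mul_of_mem_closure {a : R}
    (ha : a ∈ Subring.closure {r : R | ∃ n : ℤ, r ∈ 𝒜 (2 * n)}) (r : R) :
    projPred 𝒜 Even (r * a) = projPred 𝒜 Even r * a := by
  induction ha using Subring.closure_induction generalizing r with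
  | mem a ha =>
    obtain ⟨n, ha⟩ := ha
    refine projPred_mul_of_mem (fun i => ?_) ha r
    rw [Int.even_add, iff_true_right (even_two_mul n)]
  | zero => simp
  | one => simp
  | add a b _ _ ha hb => simp [mul_add, ha, hb]
  | neg a _ ha => simp [ha]
  | mul a b _ _ ha hb => rw [← mul_assoc, hb, ha, mul_assoc]

theorem projPred_odd_mul_of_mem_closure {a : R}
    (ha : a ∈ AddSubgroup.closure {r : R | ∃ n : ℤ, r ∈ 𝒜 (2 * n + 1)}) (r : R) :
    projPred 𝒜 Odd (r * a) = projPred 𝒜 Even r * a := by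
  induction ha using AddSubgroup.closure_induction with
  | mem a ha =>
    obtain ⟨n, ha⟩ := ha
    refine projPred_mul_of_mem (fun i => ?_) ha r
    rw [Int.odd_add', iff_true_left (odd_two_mul_add_one n)]
  | zero => simp
  | add a b _ _ ha hb => simp [mul_add, ha, hb]
  | neg a _ ha => simp [ha]

end Int

end GradedRing

section Retract

variable {R : Type*} [Ring R] (S : Subring R) (e : R →+ R)

theorem Subring.comap_map_subtype_eq_of_retract (he_mem : ∀ x, e x ∈ S) (he_one : e 1 = 1)
    (he_mul : ∀ r, ∀ s ∈ S, e (r * s) = e r * s) (I : Ideal S) :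
    (I.map S.subtype).comap S.subtype = I := by
  refine le_antisymm (fun x hx => ?_) Ideal.le_comap_map
  -- `x = e x`, and `e` carries `∑ rₖ iₖ` to `∑ e(rₖ) iₖ ∈ I`.
  suffices key : ∀ y ∈ I.map S.subtype, ∀ r, (⟨e (r * y), he_mem _⟩ : S) ∈ I by
    convert key x hx 1
    rw [he_mul 1 x x.2, he_one, one_mul]
  intro y hy
  induction hy using Submodule.span_induction with
  | mem y hy =>
    obtain ⟨i, hi, rfl⟩ := hy
    intro r
    convert I.mul_mem_left ⟨e r, he_mem r⟩ hi
    exact he_mul r i i.2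
  | zero => simp only [mul_zero, map_zero]; exact fun _ => I.zero_mem
  | add y z _ _ hy hz =>
    intro r
    convert I.add_mem (hy r) (hz r)
    simp [mul_add]
  | smul a y _ hy =>
    intro r
    simpa [mul_assoc] using hy (r * a)

theorem Subring.isNoetherianRing_of_retract [IsNoetherianRing R] (he_mem : ∀ x, e x ∈ S)
    (he_one : e 1 = 1) (he_mul : ∀ r, ∀ s ∈ S, e (r * s) = e r * s) : IsNoetherianRing S := by
  have hcm := S.comap_map_subtype_eq_of_retract e he_mem he_one he_mul
  rw [IsNoetherianRing, isNoetherian_iff'] at *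
  refine (OrderEmbedding.ofMapLEIff (fun I : Ideal S => I.map S.subtype) fun I J =>
    ⟨fun h => ?_, Ideal.map_mono⟩).wellFoundedGT
  exact hcm I ▸ hcm J ▸ Ideal.comap_mono h

theorem exists_finset_forall_eq_sum_of_retract [IsNoetherianRing R] (M : AddSubgroup R)
    (o : R →+ R) (he_mem : ∀ x, e x ∈ S) (he_one : e 1 = 1)
    (ho_mul : ∀ r, ∀ a ∈ M, o (r * a) = e r * a) :
    ∃ s : Finset R, (s : Set R) ⊆ M ∧
      ∀ x ∈ M, ∃ c : R → R, (∀ a ∈ s, c a ∈ S) ∧ x = ∑ a ∈ s, c a * a := by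
  obtain ⟨s, hsM, hspan⟩ := (Submodule.fg_span_iff_fg_span_finset_subset (M : Set R)).mp
    (IsNoetherian.noetherian (Ideal.span (M : Set R)))
  refine ⟨s, hsM, fun x hx => ?_⟩
  obtain ⟨c, -, hc⟩ := Submodule.mem_span_finset.mp (hspan ▸ Submodule.subset_span hx)
  refine ⟨fun a => e (c a), fun a _ => he_mem _, ?_⟩
  calc x = o (1 * x) := by rw [ho_mul 1 x hx, he_one, one_mul]
    _ = ∑ a ∈ s, e (c a) * a := by
      rw [one_mul, ← hc, map_sum]
      exact Finset.sum_congr rfl fun a ha => ho_mul _ _ (hsM ha)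

end Retract

open GradedRing in
theorem stmt_1_general {R : Type*} [Ring R] (𝒜 : ℤ → AddSubgroup R) [GradedRing 𝒜]
    (Reven : Subring R)
    (hReven : Reven = Subring.closure {r : R | ∃ n : ℤ, r ∈ 𝒜 (2 * n)})
    (Rodd : AddSubgroup R)
    (hRodd : Rodd = AddSubgroup.closure {r : R | ∃ n : ℤ, r ∈ 𝒜 (2 * n + 1)})
    (hNoeth : IsNoetherianRing R) :
    IsNoetherianRing Reven ∧
      ∃ s : Finset R, (↑s : Set R) ⊆ (Rodd : Set R) ∧
        ∀ x ∈ Rodd, ∃ c : R → R, (∀ a ∈ s, c a ∈ Reven) ∧ x = ∑ a ∈ s, c a * a := by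
  subst hReven hRodd
  constructor
  · exact Subring.isNoetherianRing_of_retract _ (projPred 𝒜 Even) projPred_even_mem_closure
      projPred_even_one fun r _ hs => projPred_even_mul_of_mem_closure hs r
  · exact exists_finset_forall_eq_sum_of_retract _ (projPred 𝒜 Even) _ (projPred 𝒜 Odd)
      projPred_even_mem_closure projPred_even_one fun r _ ha => projPred_odd_mul_of_mem_closure ha r

/-- Let `R` be a `ℤ`-graded ring which is graded-commutative
(`x * y = (-1)^(|x||y|) * (y * x)` for homogeneous `x`, `y`).  If `R` is Noetherian,
then the even-degree subring `π_even R` is Noetherian, and the odd part `π_odd R`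
is a finitely generated module over `π_even R`. -/
theorem stmt_1 {R : Type*} [Ring R] (𝒜 : ℤ → AddSubgroup R) [GradedRing 𝒜]
    (hgc : ∀ (i j : ℤ) (x y : R), x ∈ 𝒜 i → y ∈ 𝒜 j →
      x * y = ((-1 : ℤˣ) ^ (i * j) : ℤˣ) • (y * x))
    (Reven : Subring R)
    (hReven : Reven = Subring.closure {r : R | ∃ n : ℤ, r ∈ 𝒜 (2 * n)})
    (Rodd : AddSubgroup R)
    (hRodd : Rodd = AddSubgroup.closure {r : R | ∃ n : ℤ, r ∈ 𝒜 (2 * n + 1)})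
    (hNoeth : IsNoetherianRing R) :
    IsNoetherianRing Reven ∧
      ∃ s : Finset R, (↑s : Set R) ⊆ (Rodd : Set R) ∧
        ∀ x ∈ Rodd, ∃ c : R → R, (∀ a ∈ s, c a ∈ Reven) ∧ x = ∑ a ∈ s, c a * a :=
  stmt_1_general 𝒜 Reven hReven Rodd hRodd hNoeth
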